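/- arXiv:math/0201192 — 4 statements merged into one kernel-verified Lean document; each statement's English description precedes it below -/
import Mathlib

section
/- Let G be a finite-dimensional Lie group acting smoothly and properly on a finite-dimensional Hausdorff second-countable smooth manifold M without boundary. If x, y ∈ M are such that f(x) = f(y) for every smooth G-invariant function f : M → ℝ, then y lies in the G-orbit of x, i.e. there exists g ∈ G with g·x = y. In other words, the smooth G-invariant functions separate the G-orbits. -/
/-!
Properness makes the orbit `G • y` closed, so there is a smooth bump function `χ` at `x`
vanishing on it. Averaging over `G` against a right Haar measure gives
`f z = ∫ χ (g • z) dg`, which is `G`-invariant, positive at `x` and zero at `y`. Properness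
also makes `g ↦ χ (g • z)` supported in a fixed compact set for `z` in a compact set, so `f`
is smooth by differentiating under the integral sign in charts.
-/

open scoped Manifold Topology Pointwise
open Set Function Filter MeasureTheory

universe u

theorem integrable_of_continuousOn_uncurry_of_compact_support
    {N : Type*} [TopologicalSpace N] [T2Space N] [MeasurableSpace N] [OpensMeasurableSpace N]
    {μ : Measure N} [IsFiniteMeasureOnCompacts μ] {V W : Type*} [TopologicalSpace V]
    [NormedAddCommGroup W] {F : N → V → W} {s : Set V} {K : Set N} (hK : IsCompact K)
    (hF : ContinuousOn (uncurry F) (univ ×ˢ s)) (hFK : ∀ a ∉ K, ∀ u ∈ s, F a u = 0)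
    {u : V} (hu : u ∈ s) :
    Integrable (fun a => F a u) μ :=
  (hF.comp_continuous (Continuous.prodMk_left u) fun _ => ⟨mem_univ _, hu⟩)
    |>.integrable_of_hasCompactSupport (HasCompactSupport.intro hK fun a ha => hFK a ha u hu)

theorem fderiv_apply_eq_zero_of_apply_eq_zero {N V W : Type*} [NormedAddCommGroup V]
    [NormedSpace ℝ V] [NormedAddCommGroup W] [NormedSpace ℝ W]
    {F : N → V → W} {s : Set V} {K : Set N}
    (hs : IsOpen s) (hFK : ∀ a ∉ K, ∀ u ∈ s, F a u = 0) :
    ∀ a ∉ K, ∀ u ∈ s, fderiv ℝ (F a) u = 0 := fun a ha u hu => by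
  rw [(eventuallyEq_of_mem (hs.mem_nhds hu) (hFK a ha)).fderiv_eq, fderiv_const_apply]

section ParametricIntegral

variable {E : Type*} [NormedAddCommGroup E] [NormedSpace ℝ E]
  {H : Type*} [TopologicalSpace H] {I : ModelWithCorners ℝ E H}
  {N : Type*} [TopologicalSpace N] [ChartedSpace H N]
  {V W : Type u} [NormedAddCommGroup V] [NormedSpace ℝ V]
  [NormedAddCommGroup W] [NormedSpace ℝ W]

theorem ContMDiffOn.contDiffOn_apply {F : N → V → W} {s : Set V} {n : WithTop ℕ∞}
    (hF : ContMDiffOn (I.prod 𝓘(ℝ, V)) 𝓘(ℝ, W) n (uncurry F) (univ ×ˢ s)) (a : N) :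
    ContDiffOn ℝ n (F a) s :=
  (hF.comp (contMDiff_const.prodMk contMDiff_id).contMDiffOn
    fun _ hu => ⟨mem_univ a, hu⟩).contDiffOn

variable [IsManifold I 1 N]

theorem ContMDiffOn.uncurry_fderiv {F : N → V → W} {s : Set V}
    (hs : IsOpen s) {k : WithTop ℕ∞}
    (hF : ContMDiffOn (I.prod 𝓘(ℝ, V)) 𝓘(ℝ, W) (k + 1) (uncurry F) (univ ×ˢ s)) :
    ContMDiffOn (I.prod 𝓘(ℝ, V)) 𝓘(ℝ, V →L[ℝ] W) k
      (uncurry fun a u => fderiv ℝ (F a) u) (univ ×ˢ s) := by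
  intro p hp
  have hFp : ContMDiffAt ((I.prod 𝓘(ℝ, V)).prod 𝓘(ℝ, V)) 𝓘(ℝ, W) (k + 1)
      (uncurry fun (q : N × V) v => F q.1 v) (p, p.2) :=
    (hF.contMDiffAt ((isOpen_univ.prod hs).mem_nhds hp)).comp (p, p.2)
      ((contMDiff_fst.comp contMDiff_fst).prodMk contMDiff_snd).contMDiffAt
  have hD := ContMDiffAt.mfderiv (fun (q : N × V) v => F q.1 v) Prod.snd hFp
    contMDiff_snd.contMDiffAt le_rfl
  erw [inTangentCoordinates_model_space] at hD
  simp only [mfderiv_eq_fderiv] at hD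
  exact hD.contMDiffWithinAt

variable [T2Space N] [MeasurableSpace N] [OpensMeasurableSpace N]
  {μ : Measure N} [IsFiniteMeasureOnCompacts μ]

theorem hasFDerivAt_integral_of_contMDiffOn [LocallyCompactSpace V]
    {F : N → V → W} {s : Set V} {K : Set N} (hs : IsOpen s) (hK : IsCompact K)
    (hF : ContMDiffOn (I.prod 𝓘(ℝ, V)) 𝓘(ℝ, W) 1 (uncurry F) (univ ×ˢ s))
    (hFK : ∀ a ∉ K, ∀ u ∈ s, F a u = 0) {u₀ : V} (hu₀ : u₀ ∈ s) :
    HasFDerivAt (fun u => ∫ a, F a u ∂μ) (∫ a, fderiv ℝ (F a) u₀ ∂μ) u₀ := by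
  have hF' := ContMDiffOn.uncurry_fderiv hs (k := 0) hF
  have hFK' := fderiv_apply_eq_zero_of_apply_eq_zero hs hFK
  obtain ⟨L, hL, hLs, hLc⟩ := local_compact_nhds (hs.mem_nhds hu₀)
  obtain ⟨C, hC⟩ := (hK.prod hLc).exists_bound_of_continuousOn
    (hF'.continuousOn.mono (prod_mono (subset_univ K) hLs))
  refine hasFDerivAt_integral_of_dominated_of_fderiv_le (F := fun u a => F a u)
    (F' := fun u a => fderiv ℝ (F a) u)
    (bound := K.indicator fun _ => C) hL ?_
    (integrable_of_continuousOn_uncurry_of_compact_support hK hF.continuousOn hFK hu₀)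
    (integrable_of_continuousOn_uncurry_of_compact_support hK hF'.continuousOn hFK' hu₀
      ).aestronglyMeasurable ?_ ?_ ?_
  · filter_upwards [hs.mem_nhds hu₀] with u hu
    exact (integrable_of_continuousOn_uncurry_of_compact_support hK hF.continuousOn hFK hu
      ).aestronglyMeasurable
  · refine Eventually.of_forall fun a u hu => ?_
    by_cases ha : a ∈ K
    · rw [indicator_of_mem ha]
      exact hC (a, u) ⟨ha, hu⟩
    · rw [indicator_of_notMem ha, hFK' a ha u (hLs hu), norm_zero]
  · exact (integrable_indicator_iff hK.measurableSet).2 (integrableOn_const hK.measure_ne_top)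
  · refine Eventually.of_forall fun a u hu => ?_
    exact ((hF.contDiffOn_apply a).differentiableOn one_ne_zero
      |>.differentiableAt (hs.mem_nhds (hLs hu))).hasFDerivAt

theorem contDiffOn_integral_of_contMDiffOn [LocallyCompactSpace V]
    {F : N → V → W} {s : Set V} {K : Set N} (hs : IsOpen s) (hK : IsCompact K) {n : ℕ}
    (hF : ContMDiffOn (I.prod 𝓘(ℝ, V)) 𝓘(ℝ, W) n (uncurry F) (univ ×ˢ s))
    (hFK : ∀ a ∉ K, ∀ u ∈ s, F a u = 0) :
    ContDiffOn ℝ n (fun u => ∫ a, F a u ∂μ) s := by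
  induction n generalizing W with
  | zero =>
    rw [Nat.cast_zero, contDiffOn_zero]
    exact continuousOn_integral_of_compact_support hK
      ((hF.continuousOn.comp continuous_swap.continuousOn fun p hp => ⟨mem_univ _, hp.1⟩))
      fun u a hu ha => hFK a ha u hu
  | succ k ih =>
    have hFK' := fderiv_apply_eq_zero_of_apply_eq_zero hs hFK
    have hD := fun u (hu : u ∈ s) => hasFDerivAt_integral_of_contMDiffOn (μ := μ) hs hK
      (hF.of_le (by exact_mod_cast Nat.le_add_left 1 k)) hFK hu
    rw [Nat.cast_succ, contDiffOn_succ_iff_fderiv_of_isOpen hs]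
    refine ⟨fun u hu => (hD u hu).differentiableAt.differentiableWithinAt, by simp, ?_⟩
    exact (ih (hF.uncurry_fderiv hs) hFK').congr fun u hu => (hD u hu).fderiv

/-- The induction in `contDiffOn_integral_of_contMDiffOn` passes from `W` to `V →L[ℝ] W`, which
forces `W` into the universe of `V`; real values are lifted there. -/
theorem contDiffOn_integral_of_contMDiffOn_real [LocallyCompactSpace V]
    {F : N → V → ℝ} {s : Set V} {K : Set N} (hs : IsOpen s) (hK : IsCompact K) {n : ℕ}
    (hF : ContMDiffOn (I.prod 𝓘(ℝ, V)) 𝓘(ℝ, ℝ) n (uncurry F) (univ ×ˢ s))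
    (hFK : ∀ a ∉ K, ∀ u ∈ s, F a u = 0) :
    ContDiffOn ℝ n (fun u => ∫ a, F a u ∂μ) s := by
  let e : ℝ ≃L[ℝ] ULift.{u} ℝ := ContinuousLinearEquiv.ulift.symm
  have hlift := contDiffOn_integral_of_contMDiffOn (μ := μ) (F := fun a u => e (F a u)) hs hK
    ((e : ℝ →L[ℝ] ULift.{u} ℝ).contMDiff.comp_contMDiffOn hF) fun a ha u hu => by
      simp [hFK a ha u hu]
  refine (ContDiff.comp_contDiffOn e.symm.contDiff hlift).congr fun u hu => ?_
  simp [e.integral_comp_comm]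

end ParametricIntegral

theorem MulAction.isClosed_orbit_of_properSMul {G X : Type*} [Group G] [MulAction G X]
    [TopologicalSpace G] [TopologicalSpace X] [ProperSMul G X] (x : X) :
    IsClosed (MulAction.orbit G x) := by
  have h := isClosed_univ.smul_right_of_isCompact (G := G) isCompact_singleton (t := {x})
  rwa [Set.smul_singleton, image_univ] at h

theorem HasCompactSupport.comp_smul_right {G X W : Type*} [Group G] [MulAction G X]
    [TopologicalSpace G] [T2Space G] [TopologicalSpace X] [ProperSMul G X] [Zero W]
    {φ : X → W} (hφ : HasCompactSupport φ) (x : X) :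
    HasCompactSupport fun g : G => φ (g • x) := by
  refine HasCompactSupport.intro
    (ProperSMul.isCompact_setOfPred_inter_nonempty (isCompact_singleton (x := x)) hφ)
    fun g hg => ?_
  by_contra hne
  exact hg ⟨g • x, by simp, subset_tsupport φ hne⟩

section OrbitIntegral

variable {G X : Type*} [Group G] [MulAction G X] [MeasurableSpace G] (ν : Measure G)

noncomputable def orbitIntegral (φ : X → ℝ) (x : X) : ℝ :=
  ∫ g, φ (g • x) ∂ν

theorem orbitIntegral_smul [MeasurableMul G] [ν.IsMulRightInvariant] (φ : X → ℝ) (g : G)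
    (x : X) :
    orbitIntegral ν φ (g • x) = orbitIntegral ν φ x := by
  simp only [orbitIntegral, smul_smul]
  exact integral_mul_right_eq_self (fun a => φ (a • x)) g

theorem orbitIntegral_eq_zero {φ : X → ℝ} {x : X} (hφ : ∀ g : G, φ (g • x) = 0) :
    orbitIntegral ν φ x = 0 := by
  simp [orbitIntegral, hφ]

theorem orbitIntegral_pos [TopologicalSpace G] [T2Space G] [OpensMeasurableSpace G]
    [IsFiniteMeasureOnCompacts ν] [ν.IsOpenPosMeasure] [TopologicalSpace X] [ProperSMul G X]
    {φ : X → ℝ} (hφc : Continuous φ) (hφs : HasCompactSupport φ) (hφ : 0 ≤ φ) {x : X}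
    (hx : 0 < φ x) : 0 < orbitIntegral ν φ x := by
  have hcont : Continuous fun g : G => φ (g • x) := by fun_prop
  refine (integral_pos_iff_support_of_nonneg (fun g => hφ (g • x))
    (hcont.integrable_of_hasCompactSupport (hφs.comp_smul_right x))).2 ?_
  exact hcont.isOpen_support.measure_pos ν ⟨1, by simpa using hx.ne'⟩

end OrbitIntegral

theorem contMDiff_orbitIntegral
    {E : Type*} [NormedAddCommGroup E] [NormedSpace ℝ E]
    {H : Type*} [TopologicalSpace H] {I : ModelWithCorners ℝ E H}
    {G : Type*} [TopologicalSpace G] [ChartedSpace H G] [IsManifold I 1 G] [T2Space G] [Group G]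
    [MeasurableSpace G] [OpensMeasurableSpace G] (ν : Measure G) [IsFiniteMeasureOnCompacts ν]
    {E' : Type*} [NormedAddCommGroup E'] [NormedSpace ℝ E'] [FiniteDimensional ℝ E']
    {H' : Type*} [TopologicalSpace H'] {J : ModelWithCorners ℝ E' H'} [J.Boundaryless]
    {M : Type*} [TopologicalSpace M] [ChartedSpace H' M] {n : ℕ} [IsManifold J n M]
    [MulAction G M] [ProperSMul G M]
    (hact : ContMDiff (I.prod J) J n fun p : G × M => p.1 • p.2)
    {φ : M → ℝ} (hφ : ContMDiff J 𝓘(ℝ, ℝ) n φ) (hφs : HasCompactSupport φ) :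
    ContMDiff J 𝓘(ℝ, ℝ) n (orbitIntegral ν φ) := by
  have := Manifold.locallyCompact_of_finiteDimensional (M := M) J
  intro z₀
  set e := extChartAt J z₀
  obtain ⟨L, hLc, hL⟩ := exists_compact_mem_nhds z₀
  set s : Set E' := e.target ∩ e.symm ⁻¹' interior L
  have hs : IsOpen s :=
    (continuousOn_extChartAt_symm z₀).isOpen_inter_preimage (isOpen_extChartAt_target z₀)
      isOpen_interior
  have hz₀ : e z₀ ∈ s :=
    ⟨mem_extChartAt_target z₀, by simpa [e] using mem_interior_iff_mem_nhds.2 hL⟩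
  have hF : ContMDiffOn (I.prod 𝓘(ℝ, E')) 𝓘(ℝ, ℝ) n
      (uncurry fun (g : G) u => φ (g • e.symm u)) (univ ×ˢ s) :=
    hφ.comp_contMDiffOn <| hact.comp_contMDiffOn <| contMDiff_fst.contMDiffOn.prodMk <|
      (contMDiffOn_extChartAt_symm z₀).comp contMDiff_snd.contMDiffOn fun p hp => hp.2.1
  have hFK : ∀ g ∉ {g : G | (g • L ∩ tsupport φ).Nonempty}, ∀ u ∈ s,
      φ (g • e.symm u) = 0 := by
    intro g hg u hu
    by_contra hne
    exact hg ⟨g • e.symm u, smul_mem_smul_set (interior_subset hu.2), subset_tsupport φ hne⟩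
  have hint := contDiffOn_integral_of_contMDiffOn_real (μ := ν) hs
    (ProperSMul.isCompact_setOfPred_inter_nonempty hLc hφs) hF hFK
  refine (((hint.contDiffAt (hs.mem_nhds hz₀)).contMDiffAt).comp z₀
    contMDiffAt_extChartAt).congr_of_eventuallyEq ?_
  filter_upwards [extChartAt_source_mem_nhds (I := J) z₀] with z hz
  simp only [orbitIntegral, comp_apply, e, (extChartAt J z₀).left_inv hz]

theorem invariant_functions_separate_orbits_general
    {E : Type*} [NormedAddCommGroup E] [NormedSpace ℝ E] [FiniteDimensional ℝ E]
    {H : Type*} [TopologicalSpace H] {I : ModelWithCorners ℝ E H}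
    {G : Type*} [TopologicalSpace G] [ChartedSpace H G] [Group G] [LieGroup I (⊤ : ℕ∞) G]
    {E' : Type*} [NormedAddCommGroup E'] [NormedSpace ℝ E'] [FiniteDimensional ℝ E']
    {H' : Type*} [TopologicalSpace H'] {J : ModelWithCorners ℝ E' H'} [J.Boundaryless]
    {M : Type*} [TopologicalSpace M] [T2Space M]
    [ChartedSpace H' M] [IsManifold J (⊤ : ℕ∞) M]
    [MulAction G M]
    (hsmooth : ContMDiff (I.prod J) J (⊤ : ℕ∞) (fun p : G × M => p.1 • p.2))
    (hproper : IsProperMap (fun p : G × M => (p.1 • p.2, p.2)))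
    (x y : M)
    (hxy : ∀ f : M → ℝ, ContMDiff J 𝓘(ℝ, ℝ) (⊤ : ℕ∞) f →
      (∀ (g : G) (z : M), f (g • z) = f z) → f x = f y) :
    ∃ g : G, g • x = y := by
  by_contra hne
  have : IsTopologicalGroup G := topologicalGroup_of_lieGroup I (⊤ : ℕ∞)
  have : T1Space G := I.t1Space G
  have : LocallyCompactSpace G := Manifold.locallyCompact_of_finiteDimensional I
  have : ProperSMul G M := ⟨hproper⟩
  borelize G
  have hx : x ∉ MulAction.orbit G y := fun ⟨g, hg⟩ =>
    hne ⟨g⁻¹, by rw [← hg, inv_smul_smul]⟩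
  obtain ⟨χ, -, hχ⟩ := (SmoothBumpFunction.nhds_basis_tsupport (I := J) x).mem_iff.mp
    ((MulAction.isClosed_orbit_of_properSMul y).isOpen_compl.mem_nhds hx)
  let ν : Measure G := Measure.haar.inv
  have hfx : 0 < orbitIntegral ν χ x :=
    orbitIntegral_pos ν χ.continuous χ.hasCompactSupport (fun _ => χ.nonneg) (by simp)
  have hfy : orbitIntegral ν χ y = 0 := orbitIntegral_eq_zero ν fun g =>
    image_eq_zero_of_notMem_tsupport fun h => hχ h (MulAction.mem_orbit y g)
  have hf : ContMDiff J 𝓘(ℝ, ℝ) (⊤ : ℕ∞) (orbitIntegral ν χ) :=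
    contMDiff_infty.2 fun _ => contMDiff_orbitIntegral ν (hsmooth.of_le (mod_cast le_top))
      (χ.contMDiff.of_le (mod_cast le_top)) χ.hasCompactSupport
  exact hfx.ne' (hfy ▸ hxy _ hf (orbitIntegral_smul ν χ))

/-- If a finite-dimensional Lie group `G` acts smoothly and properly on a
finite-dimensional Hausdorff second-countable boundaryless manifold `M`, then the smooth
`G`-invariant functions separate the `G`-orbits: if `x, y ∈ M` have the same value under
every smooth `G`-invariant function `f : M → ℝ`, then `y` lies in the `G`-orbit of `x`. -/
theorem invariant_functions_separate_orbits
    {E : Type*} [NormedAddCommGroup E] [NormedSpace ℝ E] [FiniteDimensional ℝ E]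
    {H : Type*} [TopologicalSpace H] {I : ModelWithCorners ℝ E H} [I.Boundaryless]
    {G : Type*} [TopologicalSpace G] [ChartedSpace H G] [Group G] [LieGroup I (⊤ : ℕ∞) G]
    {E' : Type*} [NormedAddCommGroup E'] [NormedSpace ℝ E'] [FiniteDimensional ℝ E']
    {H' : Type*} [TopologicalSpace H'] {J : ModelWithCorners ℝ E' H'} [J.Boundaryless]
    {M : Type*} [TopologicalSpace M] [T2Space M] [SecondCountableTopology M]
    [ChartedSpace H' M] [IsManifold J (⊤ : ℕ∞) M]
    [MulAction G M]
    (hsmooth : ContMDiff (I.prod J) J (⊤ : ℕ∞) (fun p : G × M => p.1 • p.2))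
    (hproper : IsProperMap (fun p : G × M => (p.1 • p.2, p.2)))
    (x y : M)
    (hxy : ∀ f : M → ℝ, ContMDiff J 𝓘(ℝ, ℝ) (⊤ : ℕ∞) f →
      (∀ (g : G) (z : M), f (g • z) = f z) → f x = f y) :
    ∃ g : G, g • x = y :=
  invariant_functions_separate_orbits_general hsmooth hproper x y hxy
end

section
/- Let M and N be finite-dimensional Hausdorff second-countable smooth manifolds without boundary and let π : M → N be a smooth surjective map whose differential is surjective at every point of M (a surjective submersion). Let U ⊆ M be an open subset that is saturated, i.e. U = π⁻¹(π(U)), and let f : M → ℝ be smooth on U and constant on the fibers of π inside U (for all x, y ∈ U, π(x) = π(y) implies f(x) = f(y)). Then for every z ∈ U there exist a saturated open set V with z ∈ V ⊆ U and a smooth function F : M → ℝ that is constant on every fiber of π (for all x, y ∈ M, π(x) = π(y) implies F(x) = F(y)) and satisfies F = f on V. -/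
/-!
A submersion has smooth local sections through every point: in charts this is the implicit
function theorem. Hence it is an open map, and a function `f` that is smooth on an open saturated
set `U` and constant on fibres descends to a function `g` on the open set `π '' U`, smooth because
near each point it equals `f ∘ σ` for a local section `σ`. Multiplying `g` by a bump function that
is supported in `π '' U` and equals `1` on a neighbourhood `t` of `π z`, and pulling back along
`π`, gives a fibrewise constant smooth function that agrees with `f` on the saturated set
`π ⁻¹' (t ∩ π '' U)`.
-/

open scoped Manifold Topology
open Set Function Filter

theorem ContDiffAt.exists_local_rightInverse {𝕜 : Type*} [RCLike 𝕜]
    {E : Type*} [NormedAddCommGroup E] [NormedSpace 𝕜 E] [CompleteSpace E]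
    {F : Type*} [NormedAddCommGroup F] [NormedSpace 𝕜 F] [FiniteDimensional 𝕜 F]
    {p : E → F} {a : E} {n : WithTop ℕ∞} (hp : ContDiffAt 𝕜 n p a) (hn : n ≠ 0)
    (hsurj : Surjective (fderiv 𝕜 p a)) :
    ∃ s : F → E, ContDiffAt 𝕜 n s (p a) ∧ s (p a) = a ∧ ∀ᶠ y in 𝓝 (p a), p (s y) = y := by
  have := FiniteDimensional.complete 𝕜 F
  have hf := hp.hasStrictFDerivAt hn
  have hf' := LinearMap.range_eq_top.2 hsurj
  have hker := (fderiv 𝕜 p a).ker_closedComplemented_of_finiteDimensional_range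
  have : CompleteSpace (fderiv 𝕜 p a).ker := (fderiv 𝕜 p a).isClosed_ker.completeSpace_coe
  set φ := hf.implicitFunctionDataOfComplemented p _ hf' hker
  have hφ : ContDiffAt 𝕜 n φ.implicitFunction.uncurry (p a, 0) := by
    simpa [φ, ImplicitFunctionData.prodFun] using
      φ.contDiffAt_implicitFunction hp
        ((Classical.choose hker).contDiff.contDiffAt.comp _ (contDiffAt_id.sub contDiffAt_const)) hn
  refine ⟨fun y => φ.implicitFunction y 0, hφ.comp (p a) (contDiffAt_id.prodMk contDiffAt_const),
    hf.implicitFunctionOfComplemented_apply_image hf' hker, ?_⟩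
  have hlim : Tendsto (fun y : F => (y, (0 : (fderiv 𝕜 p a).ker))) (𝓝 (p a)) (𝓝 (p a, 0)) :=
    (continuous_id.prodMk continuous_const).tendsto _
  exact hlim.eventually (hf.map_implicitFunctionOfComplemented_eq hf' hker)

section Submersion

variable {𝕜 : Type*} [RCLike 𝕜]
  {E : Type*} [NormedAddCommGroup E] [NormedSpace 𝕜 E] [CompleteSpace E]
  {H : Type*} [TopologicalSpace H] {I : ModelWithCorners 𝕜 E H} [I.Boundaryless]
  {M : Type*} [TopologicalSpace M] [ChartedSpace H M]
  {E' : Type*} [NormedAddCommGroup E'] [NormedSpace 𝕜 E'] [FiniteDimensional 𝕜 E']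
  {H' : Type*} [TopologicalSpace H'] {J : ModelWithCorners 𝕜 E' H'}
  {N : Type*} [TopologicalSpace N] [ChartedSpace H' N]
  {n : WithTop ℕ∞} [IsManifold I n M] {π : M → N}

theorem exists_local_section_of_surjective_mfderiv (hn : n ≠ 0) {m : M}
    (hπ : ContMDiffAt I J n π m) (hsurj : Surjective (mfderiv I J π m)) :
    ∃ σ : N → M, ContMDiffAt J I n σ (π m) ∧ σ (π m) = m ∧ ∀ᶠ y in 𝓝 (π m), π (σ y) = y := by
  set φ := extChartAt I m
  set ψ := extChartAt J (π m)
  have hp : ContDiffAt 𝕜 n (writtenInExtChartAt I J m π) (φ m) := by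
    have := (contMDiffAt_iff.mp hπ).2
    rwa [I.range_eq_univ, contDiffWithinAt_univ] at this
  have hderiv : fderiv 𝕜 (writtenInExtChartAt I J m π) (φ m) = mfderiv I J π m := by
    rw [(hπ.mdifferentiableAt hn).mfderiv, I.range_eq_univ, fderivWithin_univ]
  rw [← hderiv] at hsurj
  obtain ⟨s, hs, hsa, hps⟩ := hp.exists_local_rightInverse hn hsurj
  have hpa : writtenInExtChartAt I J m π (φ m) = ψ (π m) := by
    simp [writtenInExtChartAt, φ, ψ]
  rw [hpa] at hs hsa hps
  refine ⟨φ.symm ∘ s ∘ ψ, ?_, by simp [hsa, φ], ?_⟩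
  · have hφsymm : ContMDiffAt 𝓘(𝕜, E) I n φ.symm (s (ψ (π m))) := by
      rw [hsa]
      exact (contMDiffOn_extChartAt_symm m).contMDiffAt (extChartAt_target_mem_nhds m)
    exact hφsymm.comp (π m) (hs.contMDiffAt.comp _ contMDiffAt_extChartAt)
  · have hψ : ContinuousAt ψ (π m) := continuousAt_extChartAt (π m)
    have hs_cont : ContinuousAt (s ∘ ψ) (π m) := hs.continuousAt.comp hψ
    have hchart : ∀ᶠ x in 𝓝 (φ m), π (φ.symm x) ∈ ψ.source :=
      (hπ.continuousAt.comp_of_eq (continuousAt_extChartAt_symm m)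
        (extChartAt_to_inv m)).preimage_mem_nhds
        (by rw [comp_apply, extChartAt_to_inv]; exact extChartAt_source_mem_nhds (π m))
    rw [← hsa] at hchart
    filter_upwards [hψ.preimage_mem_nhds hps, hs_cont.preimage_mem_nhds hchart,
      extChartAt_source_mem_nhds (I := J) (π m)] with y hy hsy hyψ
    calc π ((φ.symm ∘ s ∘ ψ) y) = ψ.symm (ψ (π (φ.symm (s (ψ y))))) := (ψ.left_inv hsy).symm
      _ = ψ.symm (ψ y) := congrArg ψ.symm hy
      _ = y := ψ.left_inv hyψ

theorem isOpenMap_of_surjective_mfderiv (hn : n ≠ 0) (hπ : ContMDiff I J n π)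
    (hsurj : ∀ m, Surjective (mfderiv I J π m)) : IsOpenMap π := by
  refine fun U hU => isOpen_iff_mem_nhds.2 ?_
  rintro _ ⟨m, hm, rfl⟩
  obtain ⟨σ, hσ, hσm, hπσ⟩ := exists_local_section_of_surjective_mfderiv hn (hπ m) (hsurj m)
  have hσU : ∀ᶠ y in 𝓝 (π m), σ y ∈ U :=
    hσ.continuousAt.preimage_mem_nhds (by rw [hσm]; exact hU.mem_nhds hm)
  filter_upwards [hσU, hπσ] with y hyU hy using ⟨σ y, hyU, hy⟩

theorem exists_contMDiffOn_image_comp_eq_of_surjective_mfderiv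
    {F : Type*} [NormedAddCommGroup F] [NormedSpace 𝕜 F] (hn : n ≠ 0) (hπ : ContMDiff I J n π)
    (hsurj : ∀ m, Surjective (mfderiv I J π m)) {U : Set M} (hU : IsOpen U) {f : M → F}
    (hf : ContMDiffOn I 𝓘(𝕜, F) n f U) (hfib : ∀ x ∈ U, ∀ y ∈ U, π x = π y → f x = f y) :
    ∃ g : N → F, ContMDiffOn J 𝓘(𝕜, F) n g (π '' U) ∧ ∀ x ∈ U, g (π x) = f x := by
  classical
  let g : N → F := fun y => if h : y ∈ π '' U then f h.choose else 0
  have hgf : ∀ x ∈ U, g (π x) = f x := fun x hx => by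
    have h : π x ∈ π '' U := mem_image_of_mem π hx
    simp only [g, dif_pos h]
    exact hfib _ h.choose_spec.1 x hx h.choose_spec.2
  refine ⟨g, ?_, hgf⟩
  rintro _ ⟨m, hm, rfl⟩
  obtain ⟨σ, hσ, hσm, hπσ⟩ := exists_local_section_of_surjective_mfderiv hn (hπ m) (hsurj m)
  have hσU : ∀ᶠ y in 𝓝 (π m), σ y ∈ U :=
    hσ.continuousAt.preimage_mem_nhds (by rw [hσm]; exact hU.mem_nhds hm)
  have hfσ : ContMDiffAt J 𝓘(𝕜, F) n (f ∘ σ) (π m) :=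
    (hσm ▸ hf.contMDiffAt (hU.mem_nhds hm)).comp (π m) hσ
  refine (hfσ.congr_of_eventuallyEq ?_).contMDiffWithinAt
  filter_upwards [hσU, hπσ] with y hyU hy
  rw [← hy, hgf _ hyU, comp_apply, hy]

end Submersion

theorem submersion_fiber_constant_extension_property_general
    {E : Type*} [NormedAddCommGroup E] [NormedSpace ℝ E] [FiniteDimensional ℝ E]
    {H : Type*} [TopologicalSpace H] {I : ModelWithCorners ℝ E H} [I.Boundaryless]
    {M : Type*} [TopologicalSpace M]
    [ChartedSpace H M] [IsManifold I (⊤ : ℕ∞) M]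
    {E' : Type*} [NormedAddCommGroup E'] [NormedSpace ℝ E'] [FiniteDimensional ℝ E']
    {H' : Type*} [TopologicalSpace H'] {J : ModelWithCorners ℝ E' H'}
    {N : Type*} [TopologicalSpace N] [T2Space N]
    [ChartedSpace H' N] [IsManifold J (⊤ : ℕ∞) N]
    (π : M → N) (hπ : ContMDiff I J (⊤ : ℕ∞) π)
    (hπsub : ∀ m : M, Function.Surjective (mfderiv I J π m))
    (U : Set M) (hUopen : IsOpen U) (hUsat : U = π ⁻¹' (π '' U))
    (f : M → ℝ) (hfsmooth : ContMDiffOn I 𝓘(ℝ, ℝ) (⊤ : ℕ∞) f U)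
    (hffib : ∀ x ∈ U, ∀ y ∈ U, π x = π y → f x = f y) :
    ∀ z ∈ U, ∃ V : Set M, IsOpen V ∧ z ∈ V ∧ V ⊆ U ∧ V = π ⁻¹' (π '' V) ∧
      ∃ F : M → ℝ, ContMDiff I 𝓘(ℝ, ℝ) (⊤ : ℕ∞) F ∧
        (∀ x y : M, π x = π y → F x = F y) ∧ ∀ x ∈ V, F x = f x := by
  intro z hz
  have hn : ((⊤ : ℕ∞) : WithTop ℕ∞) ≠ 0 := by simp
  have hUimg : IsOpen (π '' U) := isOpenMap_of_surjective_mfderiv hn hπ hπsub U hUopen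
  obtain ⟨g, hg, hgf⟩ :=
    exists_contMDiffOn_image_comp_eq_of_surjective_mfderiv hn hπ hπsub hUopen hfsmooth hffib
  obtain ⟨χ, -, hχU⟩ := (SmoothBumpFunction.nhds_basis_tsupport (I := J) (π z)).mem_iff.1
    (hUimg.mem_nhds (mem_image_of_mem π hz))
  obtain ⟨t, hχt, ht, hzt⟩ := eventually_nhds_iff.1 χ.eventuallyEq_one
  set G : N → ℝ := fun y => χ y • g y
  have hG : ContMDiff J 𝓘(ℝ, ℝ) (⊤ : ℕ∞) G :=
    contMDiff_of_tsupport fun y hy => χ.contMDiffAt.smul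
      (hg.contMDiffAt (hUimg.mem_nhds (hχU (tsupport_smul_subset_left _ _ hy))))
  have hVU : π ⁻¹' (t ∩ π '' U) ⊆ U := fun x hx => by rw [hUsat]; exact hx.2
  refine ⟨π ⁻¹' (t ∩ π '' U), (ht.inter hUimg).preimage hπ.continuous,
    ⟨hzt, mem_image_of_mem π hz⟩, hVU, preimage_image_preimage.symm,
    G ∘ π, hG.comp hπ, fun x y hxy => congrArg G hxy, fun x hx => ?_⟩
  simp [G, hχt _ hx.1, hgf x (hVU hx)]

/-- Extension property for the foliation given by the fibers of a surjective submersion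
`π : M → N`: if `U ⊆ M` is open and saturated and `f : M → ℝ` is smooth on `U` and
constant on the fibers of `π` inside `U`, then every `z ∈ U` admits a saturated open
neighborhood `V ⊆ U` on which `f` coincides with a globally defined smooth function
`F : M → ℝ` that is constant on every fiber of `π`. -/
theorem submersion_fiber_constant_extension_property
    {E : Type*} [NormedAddCommGroup E] [NormedSpace ℝ E] [FiniteDimensional ℝ E]
    {H : Type*} [TopologicalSpace H] {I : ModelWithCorners ℝ E H} [I.Boundaryless]
    {M : Type*} [TopologicalSpace M] [T2Space M] [SecondCountableTopology M]
    [ChartedSpace H M] [IsManifold I (⊤ : ℕ∞) M]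
    {E' : Type*} [NormedAddCommGroup E'] [NormedSpace ℝ E'] [FiniteDimensional ℝ E']
    {H' : Type*} [TopologicalSpace H'] {J : ModelWithCorners ℝ E' H'} [J.Boundaryless]
    {N : Type*} [TopologicalSpace N] [T2Space N] [SecondCountableTopology N]
    [ChartedSpace H' N] [IsManifold J (⊤ : ℕ∞) N]
    (π : M → N) (hπ : ContMDiff I J (⊤ : ℕ∞) π) (hπsurj : Function.Surjective π)
    (hπsub : ∀ m : M, Function.Surjective (mfderiv I J π m))
    (U : Set M) (hUopen : IsOpen U) (hUsat : U = π ⁻¹' (π '' U))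
    (f : M → ℝ) (hfsmooth : ContMDiffOn I 𝓘(ℝ, ℝ) (⊤ : ℕ∞) f U)
    (hffib : ∀ x ∈ U, ∀ y ∈ U, π x = π y → f x = f y) :
    ∀ z ∈ U, ∃ V : Set M, IsOpen V ∧ z ∈ V ∧ V ⊆ U ∧ V = π ⁻¹' (π '' V) ∧
      ∃ F : M → ℝ, ContMDiff I 𝓘(ℝ, ℝ) (⊤ : ℕ∞) F ∧
        (∀ x y : M, π x = π y → F x = F y) ∧ ∀ x ∈ V, F x = f x :=
  submersion_fiber_constant_extension_property_general π hπ hπsub U hUopen hUsat f hfsmooth hffib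
end

section
/- Let M be a Hausdorff smooth manifold without boundary modeled on a finite-dimensional real normed space, and let X be a smooth vector field on M (the assignment x ↦ X(x) ∈ T_xM is a smooth section of the tangent bundle). Suppose X has compact support, i.e. there exists a compact set C ⊆ M with X(x) = 0 for all x ∉ C. Then X is complete: for every x₀ ∈ M there exists a curve γ : ℝ → M with γ(0) = x₀ that is an integral curve of X defined for all time t ∈ ℝ. -/
open scoped Manifold Topology
open Set Function Metric

/-!
Near each point, solve the ODE in a chart by Picard–Lindelöf: since the local flow is jointly
continuous, every initial point close enough to `x` has a solution that stays in the chart for a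
uniform time `ε(x) > 0`. Finitely many such neighbourhoods cover the compact support `C`, and off
`C` the constant curve is an integral curve, so one `ε > 0` works for every initial point. An
integral curve through every point on `(-ε, ε)` extends, by uniqueness and gluing, to all of `ℝ`.
-/

lemma IsCompact.exists_pos_forall_of_eventually {X : Type*} [TopologicalSpace X] {K : Set X}
    (hK : IsCompact K) {P : ℝ → X → Prop} (hP : ∀ x, Antitone (P · x))
    (h : ∀ x ∈ K, ∃ ε > 0, ∀ᶠ y in 𝓝 x, P ε y) : ∃ ε > 0, ∀ x ∈ K, P ε x := by
  refine hK.induction_on ⟨1, one_pos, by simp⟩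
    (fun s t hst ⟨ε, hε, ht⟩ ↦ ⟨ε, hε, fun x hx ↦ ht x (hst hx)⟩)
    (fun s t ⟨ε, hε, hs⟩ ⟨ε', hε', ht⟩ ↦ ⟨min ε ε', lt_min hε hε', ?_⟩) fun x hx ↦ ?_
  · rintro x (hx | hx)
    · exact hP x (min_le_left _ _) (hs x hx)
    · exact hP x (min_le_right _ _) (ht x hx)
  · obtain ⟨ε, hε, hev⟩ := h x hx
    exact ⟨{y | P ε y}, mem_nhdsWithin_of_mem_nhds hev, ε, hε, fun _ hy ↦ hy⟩

section

variable {E : Type*} [NormedAddCommGroup E] [NormedSpace ℝ E]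

/- Joint continuity of the local flow keeps the solutions starting near `x₀` inside `U` for a
uniform time. -/
theorem ContDiffAt.exists_pos_eventually_exists_forall_mem_Ioo_hasDerivAt_mem {f : E → E}
    {x₀ : E} [CompleteSpace E] (hf : ContDiffAt ℝ 1 f x₀) {U : Set E} (hU : U ∈ 𝓝 x₀) :
    ∃ ε > 0, ∀ᶠ x in 𝓝 x₀, ∃ α : ℝ → E, α 0 = x ∧
      ∀ t ∈ Ioo (-ε) ε, HasDerivAt α (f (α t)) t ∧ α t ∈ U := by
  obtain ⟨ε, hε, a, r, L, K, hr, hpl⟩ := IsPicardLindelof.of_contDiffAt_one hf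
  obtain ⟨α, hα, hcont⟩ := (hpl 0).exists_forall_mem_closedBall_eq_hasDerivWithinAt_continuousOn
  have hbox : closedBall x₀ r ×ˢ Icc (0 - ε) (0 + ε) ∈ 𝓝 (x₀, (0 : ℝ)) :=
    prod_mem_nhds (closedBall_mem_nhds _ hr) (Icc_mem_nhds (by linarith) (by linarith))
  have hαU : α ⁻¹' U ∈ 𝓝 (x₀, (0 : ℝ)) :=
    (hcont.continuousAt hbox).preimage_mem_nhds (by rwa [(hα x₀ (mem_closedBall_self hr.le)).1])
  obtain ⟨δ, hδ, hball⟩ := Metric.mem_nhds_iff.mp hαU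
  rw [← ball_prod_same] at hball
  refine ⟨min δ ε, lt_min hδ hε, ?_⟩
  filter_upwards [ball_mem_nhds x₀ hδ, closedBall_mem_nhds x₀ hr] with x hx hxr
  refine ⟨fun t ↦ α (x, t), (hα x hxr).1, fun t ht ↦ ⟨?_, hball (mk_mem_prod hx ?_)⟩⟩
  · have htε : t ∈ Ioo (0 - ε) (0 + ε) := by
      rw [zero_sub, zero_add]
      exact Ioo_subset_Ioo (neg_le_neg (min_le_right _ _)) (min_le_right _ _) ht
    exact ((hα x hxr).2 t (Ioo_subset_Icc_self htε)).hasDerivAt (Icc_mem_nhds htε.1 htε.2)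
  · rw [Real.ball_eq_Ioo, zero_sub, zero_add]
    exact Ioo_subset_Ioo (neg_le_neg (min_le_left _ _)) (min_le_left _ _) ht

variable {H : Type*} [TopologicalSpace H] {I : ModelWithCorners ℝ E H}
  {M : Type*} [TopologicalSpace M] [ChartedSpace H M] [IsManifold I 1 M]

variable (I) in
noncomputable def chartVectorField (v : (x : M) → TangentSpace I x) (x₀ : M) (y : E) : E :=
  tangentCoordChange I ((extChartAt I x₀).symm y) x₀ ((extChartAt I x₀).symm y)
    (v ((extChartAt I x₀).symm y))

theorem ContMDiffAt.contDiffAt_chartVectorField {v : (x : M) → TangentSpace I x} {x₀ : M}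
    (hv : ContMDiffAt I I.tangent 1 (fun x ↦ (⟨x, v x⟩ : TangentBundle I M)) x₀)
    (hx : I.IsInteriorPoint x₀) :
    ContDiffAt ℝ 1 (chartVectorField I v x₀) (extChartAt I x₀ x₀) :=
  -- `chartVectorField I v x₀` is definitionally the fibre coordinate of `x ↦ ⟨x, v x⟩` read in
  -- the charts at `x₀` and `⟨x₀, v x₀⟩`
  ((contMDiffAt_iff.mp hv).2.contDiffAt (range_mem_nhds_isInteriorPoint hx)).snd

theorem HasDerivAt.hasMFDerivAt_extChartAt_symm_comp {x₀ : M} {f : ℝ → E} {t : ℝ} {w : E}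
    (hf : HasDerivAt f (tangentCoordChange I ((extChartAt I x₀).symm (f t)) x₀
      ((extChartAt I x₀).symm (f t)) w) t)
    (ht : f t ∈ interior (extChartAt I x₀).target) :
    HasMFDerivAt 𝓘(ℝ, ℝ) I ((extChartAt I x₀).symm ∘ f) t ((1 : ℝ →L[ℝ] ℝ).smulRight w) := by
  set xₜ := (extChartAt I x₀).symm (f t)
  have ht' := interior_subset ht
  have hxₜ₀ : xₜ ∈ (extChartAt I x₀).source := (extChartAt I x₀).map_target ht'
  have hxₜ : xₜ ∈ (extChartAt I xₜ).source := mem_extChartAt_source xₜ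
  refine ⟨(continuousAt_extChartAt_symm'' ht').comp hf.continuousAt, ?_⟩
  change HasFDerivWithinAt (𝕜 := ℝ) (E := ℝ) (F := E) _
    (ContinuousLinearMap.toSpanSingleton ℝ w) _ _
  refine HasDerivWithinAt.hasFDerivWithinAt ?_
  simp only [mfld_simps, hasDerivWithinAt_univ]
  change HasDerivAt ((extChartAt I xₜ ∘ (extChartAt I x₀).symm) ∘ f) w t
  rw [← tangentCoordChange_self (I := I) (x := xₜ) (z := xₜ) (v := w) hxₜ,
    ← tangentCoordChange_comp (x := x₀) ⟨⟨hxₜ, hxₜ₀⟩, hxₜ⟩]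
  refine HasFDerivAt.comp_hasDerivAt _ ?_ hf
  refine HasFDerivWithinAt.hasFDerivAt (s := range I) ?_ <|
    mem_nhds_iff.mpr ⟨interior (extChartAt I x₀).target,
      interior_subset.trans (extChartAt_target_subset_range ..), isOpen_interior, ht⟩
  rw [← (extChartAt I x₀).right_inv ht']
  exact hasFDerivWithinAt_tangentCoordChange ⟨hxₜ₀, hxₜ⟩

theorem exists_pos_eventually_exists_isMIntegralCurveOn [CompleteSpace E]
    {v : (x : M) → TangentSpace I x} {x₀ : M}
    (hv : ContMDiffAt I I.tangent 1 (fun x ↦ (⟨x, v x⟩ : TangentBundle I M)) x₀)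
    (hx : I.IsInteriorPoint x₀) :
    ∃ ε > 0, ∀ᶠ y in 𝓝 x₀, ∃ γ : ℝ → M, γ 0 = y ∧ IsMIntegralCurveOn γ v (Ioo (-ε) ε) := by
  obtain ⟨ε, hε, hsol⟩ := (hv.contDiffAt_chartVectorField hx)
    |>.exists_pos_eventually_exists_forall_mem_Ioo_hasDerivAt_mem
      (isOpen_interior.mem_nhds (I.isInteriorPoint_iff.mp hx))
  refine ⟨ε, hε, ?_⟩
  filter_upwards [(continuousAt_extChartAt (I := I) x₀).eventually hsol,
    extChartAt_source_mem_nhds (I := I) x₀]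
    with y ⟨α, hα0, hα⟩ hy
  refine ⟨(extChartAt I x₀).symm ∘ α, by rw [comp_apply, hα0, (extChartAt I x₀).left_inv hy],
    fun t ht ↦ ?_⟩
  exact ((hα t ht).1.hasMFDerivAt_extChartAt_symm_comp (hα t ht).2).hasMFDerivWithinAt

end

/-- A smooth compactly supported vector field on a Hausdorff boundaryless manifold modeled
on a finite-dimensional real normed space is complete: through every point there passes an
integral curve defined for all time. -/
theorem exists_isIntegralCurve_of_compactlySupported
    {E : Type*} [NormedAddCommGroup E] [NormedSpace ℝ E] [FiniteDimensional ℝ E]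
    {H : Type*} [TopologicalSpace H] {I : ModelWithCorners ℝ E H} [I.Boundaryless]
    {M : Type*} [TopologicalSpace M] [T2Space M] [ChartedSpace H M]
    [IsManifold I (⊤ : ℕ∞) M]
    (X : (x : M) → TangentSpace I x)
    (hX : ContMDiff I I.tangent (⊤ : ℕ∞) (fun x : M => (⟨x, X x⟩ : TangentBundle I M)))
    (C : Set M) (hC : IsCompact C) (hsupp : ∀ x ∉ C, X x = 0) :
    ∀ x₀ : M, ∃ γ : ℝ → M, γ 0 = x₀ ∧ IsMIntegralCurve γ X := by
  have hX1 : ContMDiff I I.tangent 1 (fun x : M => (⟨x, X x⟩ : TangentBundle I M)) :=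
    hX.of_le (by exact_mod_cast le_top)
  obtain ⟨ε, hε, hcurve⟩ := hC.exists_pos_forall_of_eventually
    (fun x _ _ hle ⟨γ, hγ0, hγ⟩ ↦ ⟨γ, hγ0, hγ.mono (Ioo_subset_Ioo (neg_le_neg hle) hle)⟩)
    fun x _ ↦ exists_pos_eventually_exists_isMIntegralCurveOn (hX1 x)
      (BoundarylessManifold.isInteriorPoint (I := I))
  refine exists_isMIntegralCurve_of_isMIntegralCurveOn hX1 hε fun x ↦ ?_
  by_cases hx : x ∈ C
  · exact hcurve x hx
  · exact ⟨fun _ ↦ x, rfl, (isMIntegralCurve_const (hsupp x hx)).isMIntegralCurveOn _⟩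
end

section
/- Let M and N be finite-dimensional Hausdorff second-countable smooth manifolds without boundary, let π : M → N be a smooth map, and let m ∈ M be a point at which the differential T_mπ : T_mM → T_{π(m)}N is surjective. Then a covector α ∈ T*_mM vanishes on the kernel of T_mπ if and only if there exists a smooth function f : N → ℝ such that α equals the differential of f ∘ π at m. Equivalently, the annihilator of ker T_mπ equals {d(f ∘ π)(m) | f : N → ℝ smooth}. -/
/-!
A covector `α` killing `ker Tₘπ` descends along the surjection `Tₘπ` to a covector `β` on
`T_{π m} N`. Every covector is the differential of a smooth function: read `β` in the chart at
the point (the extended chart has identity differential at its base point) and cut it off with a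
smooth bump function. The chain rule then gives `α = d(f ∘ π)(m)`, and conversely shows that
every `d(f ∘ π)(m)` kills `ker Tₘπ`.
-/

open scoped Manifold ContDiff

theorem ContinuousLinearMap.exists_eq_comp_of_surjective
    {𝕜 : Type*} [NontriviallyNormedField 𝕜] [CompleteSpace 𝕜]
    {V W F : Type*} [AddCommGroup V] [Module 𝕜 V] [TopologicalSpace V]
    [NormedAddCommGroup W] [NormedSpace 𝕜 W] [FiniteDimensional 𝕜 W]
    [AddCommGroup F] [Module 𝕜 F] [TopologicalSpace F] [IsTopologicalAddGroup F]
    [ContinuousSMul 𝕜 F]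
    (L : V →L[𝕜] W) (hL : Function.Surjective L) (α : V →L[𝕜] F)
    (h : ∀ v, L v = 0 → α v = 0) : ∃ β : W →L[𝕜] F, α = β.comp L := by
  let e := (L : V →ₗ[𝕜] W).quotKerEquivOfSurjective hL
  let β : (V ⧸ LinearMap.ker (L : V →ₗ[𝕜] W)) →ₗ[𝕜] F := (LinearMap.ker _).liftQ α h
  refine ⟨(β ∘ₗ e.symm.toLinearMap).toContinuousLinearMap, ?_⟩
  ext v
  exact congrArg β ((L : V →ₗ[𝕜] W).quotKerEquivOfSurjective_symm_apply hL v).symm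

section

variable {E : Type*} [NormedAddCommGroup E] [NormedSpace ℝ E]
  {H : Type*} [TopologicalSpace H] {I : ModelWithCorners ℝ E H}
  {M : Type*} [TopologicalSpace M] [ChartedSpace H M]
  {F : Type*} [NormedAddCommGroup F] [NormedSpace ℝ F]

theorem hasMFDerivAt_comp_extChartAt [IsManifold I 1 M] (c : M) (β : E →L[ℝ] F) :
    HasMFDerivAt I 𝓘(ℝ, F) (fun x ↦ β (extChartAt I c x)) c β := by
  have hchart := (mdifferentiableAt_extChartAt (I := I) (mem_chart_source H c)).hasMFDerivAt
  rw [mfderiv_extChartAt_self] at hchart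
  exact β.hasMFDerivAt.comp c hchart

theorem exists_contMDiff_hasMFDerivAt [FiniteDimensional ℝ E] [T2Space M] [IsManifold I ∞ M]
    (c : M) (β : E →L[ℝ] F) :
    ∃ f : M → F, ContMDiff I 𝓘(ℝ, F) ∞ f ∧ HasMFDerivAt I 𝓘(ℝ, F) f c β := by
  obtain ⟨χ⟩ : Nonempty (SmoothBumpFunction I c) := inferInstance
  refine ⟨fun x ↦ χ x • β (extChartAt I c x), χ.contMDiff_smul ?_, ?_⟩
  · exact β.contMDiff.comp_contMDiffOn contMDiffOn_extChartAt
  · refine (hasMFDerivAt_comp_extChartAt c β).congr_of_eventuallyEq ?_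
    filter_upwards [χ.eventuallyEq_one] with x hx
    simp [hx]

end

theorem covector_vanishes_on_ker_iff_pullback_general
    {E : Type*} [NormedAddCommGroup E] [NormedSpace ℝ E]
    {H : Type*} [TopologicalSpace H] {I : ModelWithCorners ℝ E H}
    {M : Type*} [TopologicalSpace M]
    [ChartedSpace H M]
    {E' : Type*} [NormedAddCommGroup E'] [NormedSpace ℝ E'] [FiniteDimensional ℝ E']
    {H' : Type*} [TopologicalSpace H'] {J : ModelWithCorners ℝ E' H'}
    {N : Type*} [TopologicalSpace N] [T2Space N]
    [ChartedSpace H' N] [IsManifold J (⊤ : ℕ∞) N]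
    (π : M → N) (hπ : ContMDiff I J (⊤ : ℕ∞) π) (m : M)
    (hsurj : Function.Surjective (mfderiv I J π m))
    (α : TangentSpace I m →L[ℝ] ℝ) :
    (∀ v : TangentSpace I m, mfderiv I J π m v = 0 → α v = 0) ↔
      ∃ f : N → ℝ, ContMDiff J 𝓘(ℝ, ℝ) (⊤ : ℕ∞) f ∧ α = mfderiv I 𝓘(ℝ, ℝ) (f ∘ π) m := by
  have hπm : MDifferentiableAt I J π m := hπ.mdifferentiableAt (by simp)
  constructor
  · intro hker
    obtain ⟨β, rfl⟩ :=
      ContinuousLinearMap.exists_eq_comp_of_surjective (W := E') _ hsurj α hker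
    obtain ⟨f, hf, hfβ⟩ := exists_contMDiff_hasMFDerivAt (I := J) (π m) β
    exact ⟨f, hf, (hfβ.comp m hπm.hasMFDerivAt).mfderiv.symm⟩
  · rintro ⟨f, hf, rfl⟩ v hv
    exact (mfderiv_comp_apply m (hf.mdifferentiableAt (by simp)) hπm v).trans
      (by rw [hv, map_zero]; rfl)

/-- Let `π : M → N` be a smooth map between finite-dimensional Hausdorff second-countable
boundaryless manifolds whose differential at `m` is surjective. Then a covector
`α ∈ T*ₘM` vanishes on `ker (Tₘπ)` if and only if it is the differential at `m` of `f ∘ π`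
for some smooth function `f : N → ℝ`. -/
theorem covector_vanishes_on_ker_iff_pullback
    {E : Type*} [NormedAddCommGroup E] [NormedSpace ℝ E] [FiniteDimensional ℝ E]
    {H : Type*} [TopologicalSpace H] {I : ModelWithCorners ℝ E H} [I.Boundaryless]
    {M : Type*} [TopologicalSpace M] [T2Space M] [SecondCountableTopology M]
    [ChartedSpace H M] [IsManifold I (⊤ : ℕ∞) M]
    {E' : Type*} [NormedAddCommGroup E'] [NormedSpace ℝ E'] [FiniteDimensional ℝ E']
    {H' : Type*} [TopologicalSpace H'] {J : ModelWithCorners ℝ E' H'} [J.Boundaryless]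
    {N : Type*} [TopologicalSpace N] [T2Space N] [SecondCountableTopology N]
    [ChartedSpace H' N] [IsManifold J (⊤ : ℕ∞) N]
    (π : M → N) (hπ : ContMDiff I J (⊤ : ℕ∞) π) (m : M)
    (hsurj : Function.Surjective (mfderiv I J π m))
    (α : TangentSpace I m →L[ℝ] ℝ) :
    (∀ v : TangentSpace I m, mfderiv I J π m v = 0 → α v = 0) ↔
      ∃ f : N → ℝ, ContMDiff J 𝓘(ℝ, ℝ) (⊤ : ℕ∞) f ∧ α = mfderiv I 𝓘(ℝ, ℝ) (f ∘ π) m :=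
  covector_vanishes_on_ker_iff_pullback_general π hπ m hsurj α
end
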